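/- arXiv:2406.08480 — 5 statements merged into one kernel-verified Lean document; each statement's English description precedes it below -/
import Mathlib

section
/- For integers z1, z2, z3, the Laurent polynomial X^{z1} + X^{z2}(1 - X) + X^{z3} + (X - 3) is divisible by (X-1)^3 in Z[X, X^{-1}] if and only if z2 = z1^2 and z3 = -z1. -/
open LaurentPolynomial

private noncomputable def eps : LaurentPolynomial ℤ →ₐ[ℤ] ℤ := AddMonoidAlgebra.lift ℤ ℤ ℤ 1

private lemma eps_T (n : ℤ) : eps (T n) = 1 := by
  rw [T, eps, AddMonoidAlgebra.lift_single]; simp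

private def cc (z : ℤ) : ℤ := z * (z - 1) / 2

private lemma two_cc (z : ℤ) : 2 * cc z = z * (z - 1) := by
  have h : (2 : ℤ) ∣ z * (z - 1) := by
    rcases Int.even_or_odd z with h | h
    · exact Dvd.dvd.mul_right h.two_dvd _
    · obtain ⟨m, hm⟩ := h
      exact Dvd.dvd.mul_left ⟨m, by omega⟩ _
  exact Int.mul_ediv_cancel' h

private lemma cc_succ (z : ℤ) : cc (z + 1) = cc z + z := by
  have h1 := two_cc (z + 1); have h2 := two_cc z
  have h3 : 2 * cc (z+1) = 2 * (cc z + z) := by linear_combination h1 - h2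
  omega

private noncomputable def PP (z : ℤ) : LaurentPolynomial ℤ :=
  1 + (z : LaurentPolynomial ℤ) * (T 1 - 1) + (cc z : LaurentPolynomial ℤ) * (T 1 - 1)^2

private lemma step (z : ℤ) :
    (T z - PP z) * T 1 = (T (z+1) - PP (z+1)) - (cc z : LaurentPolynomial ℤ) * (T 1 - 1)^3 := by
  have hT : (T (z+1) : LaurentPolynomial ℤ) = T z * T 1 := by rw [T_add]
  have hc : ((cc (z+1) : ℤ) : LaurentPolynomial ℤ) = (cc z : ℤ) + (z : ℤ) := by
    rw [cc_succ]; push_cast; ring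
  rw [PP, PP, hT, hc]; push_cast; ring

private lemma key (z : ℤ) :
    (T 1 - 1 : LaurentPolynomial ℤ)^3 ∣ T z - PP z := by
  induction z using Int.induction_on with
  | zero => simp [PP, cc]
  | succ k ih =>
      have h2 : (T 1 - 1 : LaurentPolynomial ℤ)^3 ∣ (T (k:ℤ) - PP k) * T 1 := ih.mul_right _
      rw [step k] at h2
      have h3 := dvd_add h2 (dvd_mul_left ((T 1 - 1 : LaurentPolynomial ℤ)^3) ((cc k : LaurentPolynomial ℤ)))
      simpa using h3
  | pred k ih =>
      have h2 : (T 1 - 1 : LaurentPolynomial ℤ)^3 ∣ (T (-(k:ℤ)-1) - PP (-(k:ℤ)-1)) * T 1 := by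
        rw [step, show (-(k:ℤ) - 1 + 1) = -(k:ℤ) by ring]
        exact dvd_sub ih (dvd_mul_left _ _)
      exact (isUnit_T 1).dvd_mul_right.mp h2

private lemma tne : (T 1 - 1 : LaurentPolynomial ℤ) ≠ 0 := by
  have h : (T 1 - 1 : LaurentPolynomial ℤ) = Polynomial.toLaurent (Polynomial.X - 1) := by simp
  rw [h, Polynomial.toLaurent_ne_zero]
  intro h
  have := congrArg (Polynomial.eval 0) h
  simp at this

private lemma const_dvd (a : ℤ) (h : (T 1 - 1 : LaurentPolynomial ℤ) ∣ (a : LaurentPolynomial ℤ)) :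
    a = 0 := by
  obtain ⟨g, hg⟩ := h
  have := congrArg eps hg
  rw [map_intCast, map_mul, map_sub, eps_T, map_one] at this
  simpa using this

private lemma lin_dvd (a b : ℤ) :
    (T 1 - 1 : LaurentPolynomial ℤ)^3 ∣ ((a : LaurentPolynomial ℤ) * (T 1 - 1) + (b : LaurentPolynomial ℤ) * (T 1 - 1)^2)
    ↔ a = 0 ∧ b = 0 := by
  haveI : IsDomain (LaurentPolynomial ℤ) := NoZeroDivisors.to_isDomain _
  set t : LaurentPolynomial ℤ := T 1 - 1 with ht
  constructor
  · intro h
    have h1 : t * t^2 ∣ t * ((a : LaurentPolynomial ℤ) + (b : LaurentPolynomial ℤ) * t) := by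
      have e1 : (a : LaurentPolynomial ℤ) * t + (b : LaurentPolynomial ℤ) * t^2
          = t * ((a : LaurentPolynomial ℤ) + (b : LaurentPolynomial ℤ) * t) := by ring
      have e2 : t^3 = t * t^2 := by ring
      rw [← e1, ← e2]; exact h
    have h2 : t^2 ∣ (a : LaurentPolynomial ℤ) + (b : LaurentPolynomial ℤ) * t :=
      (mul_dvd_mul_iff_left tne).mp h1
    have h3 : t ∣ (a : LaurentPolynomial ℤ) + (b : LaurentPolynomial ℤ) * t :=
      dvd_trans (dvd_pow_self t (by norm_num)) h2
    have h4 : t ∣ (a : LaurentPolynomial ℤ) := by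
      have := dvd_sub h3 (dvd_mul_left t (b : LaurentPolynomial ℤ))
      simpa using this
    have ha : a = 0 := const_dvd a h4
    subst ha
    have h5 : t * t ∣ t * (b : LaurentPolynomial ℤ) := by
      have e3 : (b : LaurentPolynomial ℤ) * t = t * (b : LaurentPolynomial ℤ) := by ring
      have e4 : t^2 = t * t := by ring
      rw [← e3, ← e4]
      simpa using h2
    exact ⟨rfl, const_dvd b ((mul_dvd_mul_iff_left tne).mp h5)⟩
  · rintro ⟨ha, hb⟩
    simp [ha, hb]

/-- For integers `z1, z2, z3`, the Laurent polynomial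
`X^{z1} + X^{z2}(1 - X) + X^{z3} + (X - 3)` is divisible by `(X - 1)^3`
in `ℤ[X, X⁻¹]` iff `z2 = z1^2` and `z3 = -z1`. -/
theorem divisibility_cube_iff_square (z1 z2 z3 : ℤ) :
    ((T 1 - 1 : LaurentPolynomial ℤ)) ^ 3 ∣
      (T z1 + T z2 * (1 - T 1) + T z3 + (T 1 - 3) : LaurentPolynomial ℤ)
    ↔ z2 = z1 ^ 2 ∧ z3 = -z1 := by
  have k1 := key z1
  have k2 := key z2
  have k3 := key z3
  set t : LaurentPolynomial ℤ := T 1 - 1 with ht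
  have hid : (T z1 + T z2 * (1 - T 1) + T z3 + (T 1 - 3) : LaurentPolynomial ℤ)
      = (((z1 + z3 : ℤ) : LaurentPolynomial ℤ) * t + ((cc z1 + cc z3 - z2 : ℤ) : LaurentPolynomial ℤ) * t^2)
        + ((T z1 - PP z1) + (T z2 - PP z2) * (1 - T 1) + (T z3 - PP z3)
            - ((cc z2 : ℤ) : LaurentPolynomial ℤ) * t^3) := by
    rw [PP, PP, PP, ht]; push_cast; ring
  have hbr : t^3 ∣ ((T z1 - PP z1) + (T z2 - PP z2) * (1 - T 1) + (T z3 - PP z3)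
      - ((cc z2 : ℤ) : LaurentPolynomial ℤ) * t^3) :=
    dvd_sub (dvd_add (dvd_add k1 (k2.mul_right _)) k3) (dvd_mul_left _ _)
  have t1 := two_cc z1
  have t3 := two_cc z3
  constructor
  · intro h
    have h' : t^3 ∣ (((z1 + z3 : ℤ) : LaurentPolynomial ℤ) * t + ((cc z1 + cc z3 - z2 : ℤ) : LaurentPolynomial ℤ) * t^2) := by
      have := dvd_sub h hbr
      rw [hid] at this
      simpa using this
    obtain ⟨ha, hb⟩ := (lin_dvd _ _).mp h'
    have ha' : z1 + z3 = 0 := ha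
    have hb' : cc z1 + cc z3 - z2 = 0 := hb
    have h2 : 2 * z2 = 2 * (z1^2) := by
      linear_combination (z3 - z1 - 1) * ha' - 2 * hb' + t1 + t3
    exact ⟨mul_left_cancel₀ (by norm_num : (2:ℤ) ≠ 0) h2, by omega⟩
  · rintro ⟨h2, h3⟩
    have ha' : z1 + z3 = 0 := by omega
    have hb2 : 2 * (cc z1 + cc z3 - z2) = 0 := by
      linear_combination t1 + t3 - 2 * h2 + (z3 - z1 - 1) * ha'
    have hb' : cc z1 + cc z3 - z2 = 0 := by omega
    rw [hid, ha', hb']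
    simpa using hbr
end

section
/- For integers z1, z2, z3, the Laurent polynomial X^{z1} + X^{z2} - X^{z3} - 1 is divisible by (X-1)^2 in Z[X, X^{-1}] if and only if z3 = z1 + z2. -/
open LaurentPolynomial DualNumber

noncomputable section AuxDiv

/-- The monoid hom `Multiplicative ℤ →* ℤ[ε]` sending `z ↦ 1 + z • ε`. -/
def phiAux : Multiplicative ℤ →* DualNumber ℤ where
  toFun z := 1 + (Multiplicative.toAdd z : ℤ) • (ε : DualNumber ℤ)
  map_one' := by simp
  map_mul' a b := by
    have h : ((Multiplicative.toAdd a : ℤ) • (ε : DualNumber ℤ)) *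
        ((Multiplicative.toAdd b : ℤ) • (ε : DualNumber ℤ)) = 0 := by
      rw [smul_mul_smul_comm, eps_mul_eps, smul_zero]
    simp only [toAdd_mul, mul_add, add_mul, mul_one, one_mul, h, add_zero, add_smul]
    ring

/-- Evaluation of Laurent polynomials at `1 + ε` in the dual numbers. -/
def fAux : LaurentPolynomial ℤ →ₐ[ℤ] DualNumber ℤ :=
  AddMonoidAlgebra.lift ℤ (DualNumber ℤ) ℤ phiAux

lemma fAux_T (n : ℤ) : fAux (T n) = 1 + n • (ε : DualNumber ℤ) := by
  unfold fAux T
  rw [AddMonoidAlgebra.lift_single]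
  simp [phiAux]

lemma smul_eps_eq_zero_aux {n : ℤ} (h : n • (ε : DualNumber ℤ) = 0) : n = 0 := by
  have := congrArg TrivSqZeroExt.snd h
  simpa using this

lemma T_sub_one_dvd_aux (z : ℤ) : (T 1 - 1 : LaurentPolynomial ℤ) ∣ (T z - 1) := by
  induction z using Int.induction_on with
  | zero => simp
  | succ k ih =>
    have : (T ((k : ℤ) + 1) - 1 : LaurentPolynomial ℤ)
        = T (k : ℤ) * (T 1 - 1) + (T (k : ℤ) - 1) := by
      rw [T_add]; ring
    rw [this]
    exact dvd_add (Dvd.intro_left _ rfl) ih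
  | pred k ih =>
    have : (T (-(k : ℤ) - 1) - 1 : LaurentPolynomial ℤ)
        = (T (-(k : ℤ)) - 1) - T (-(k : ℤ) - 1) * (T 1 - 1) := by
      have := T_add (-(k : ℤ) - 1) 1 (R := ℤ)
      rw [sub_add_cancel] at this
      rw [mul_sub, ← this]; ring
    rw [this]
    exact dvd_sub ih (Dvd.intro_left _ rfl)

/-- For integers `z1, z2, z3`, the Laurent polynomial `X^{z1} + X^{z2} - X^{z3} - 1`
is divisible by `(X - 1)^2` in `ℤ[X, X⁻¹]` iff `z3 = z1 + z2`. -/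
theorem divisibility_square_iff_sum (z1 z2 z3 : ℤ) :
    ((T 1 - 1 : LaurentPolynomial ℤ)) ^ 2 ∣
      (T z1 + T z2 - T z3 - 1 : LaurentPolynomial ℤ)
    ↔ z3 = z1 + z2 := by
  constructor
  · rintro ⟨q, hq⟩
    have hf := congrArg fAux hq
    rw [map_mul, map_pow] at hf
    have hf1 : fAux (T 1 - 1) = (ε : DualNumber ℤ) := by
      rw [map_sub, map_one, fAux_T]; simp
    rw [hf1, sq, eps_mul_eps, zero_mul] at hf
    rw [map_sub, map_sub, map_add, map_one, fAux_T, fAux_T, fAux_T] at hf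
    have h0 : (z1 + z2 - z3) • (ε : DualNumber ℤ) = 0 := by
      rw [sub_smul, add_smul, ← hf]; ring
    have := smul_eps_eq_zero_aux h0
    omega
  · rintro rfl
    have key : (T z1 + T z2 - T (z1 + z2) - 1 : LaurentPolynomial ℤ)
        = -((T z1 - 1) * (T z2 - 1)) := by
      rw [T_add]; ring
    rw [key]
    obtain ⟨a, ha⟩ := T_sub_one_dvd_aux z1
    obtain ⟨b, hb⟩ := T_sub_one_dvd_aux z2
    exact ⟨-(a * b), by rw [ha, hb]; ring⟩

end AuxDiv
end

section
/- Let z1, z2, z3 be integers. There exist integers z4, ..., z12 satisfying the following seven divisibility conditions in Z[X, X^{-1}] if and only if z3 = z1 z2: (X-1)^3 | X^{z1} + X^{z4}(1-X) + X^{z10} + (X-3); (X-1)^3 | X^{z2} + X^{z5}(1-X) + X^{z11} + (X-3); (X-1)^2 | X^{z4} + X^{z5} - X^{z6} - 1; (X-1)^2 | X^{z1} + X^{z2} - X^{z7} - 1; (X-1)^3 | X^{z7} + X^{z8}(1-X) + X^{z12} + (X-3); (X-1)^2 | X^{z3} + X^{z3} - X^{z9} - 1; (X-1)^2 | X^{z6}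 + X^{z9} - X^{z8} - 1. -/
open LaurentPolynomial

/-- The ring ℤ[s,m]/(s²-2m, sm, m²): elements a + b·s + c·m. -/
@[ext] structure A3 where
  a : ℤ
  b : ℤ
  c : ℤ

namespace A3

instance : Zero A3 := ⟨⟨0,0,0⟩⟩
instance : One A3 := ⟨⟨1,0,0⟩⟩
instance : Add A3 := ⟨fun x y => ⟨x.a+y.a, x.b+y.b, x.c+y.c⟩⟩
instance : Neg A3 := ⟨fun x => ⟨-x.a, -x.b, -x.c⟩⟩
instance : Mul A3 := ⟨fun x y => ⟨x.a*y.a, x.a*y.b + x.b*y.a, x.a*y.c + x.c*y.a + 2*x.b*y.b⟩⟩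

@[simp] lemma zero_a : (0:A3).a = 0 := rfl
@[simp] lemma zero_b : (0:A3).b = 0 := rfl
@[simp] lemma zero_c : (0:A3).c = 0 := rfl
@[simp] lemma one_a : (1:A3).a = 1 := rfl
@[simp] lemma one_b : (1:A3).b = 0 := rfl
@[simp] lemma one_c : (1:A3).c = 0 := rfl
@[simp] lemma add_a (x y : A3) : (x+y).a = x.a+y.a := rfl
@[simp] lemma add_b (x y : A3) : (x+y).b = x.b+y.b := rfl
@[simp] lemma add_c (x y : A3) : (x+y).c = x.c+y.c := rfl
@[simp] lemma neg_a (x : A3) : (-x).a = -x.a := rfl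
@[simp] lemma neg_b (x : A3) : (-x).b = -x.b := rfl
@[simp] lemma neg_c (x : A3) : (-x).c = -x.c := rfl
@[simp] lemma mul_a (x y : A3) : (x*y).a = x.a*y.a := rfl
@[simp] lemma mul_b (x y : A3) : (x*y).b = x.a*y.b + x.b*y.a := rfl
@[simp] lemma mul_c (x y : A3) : (x*y).c = x.a*y.c + x.c*y.a + 2*x.b*y.b := rfl

instance : CommRing A3 where
  add_assoc x y z := by ext <;> simp <;> ring
  zero_add x := by ext <;> simp
  add_zero x := by ext <;> simp
  add_comm x y := by ext <;> simp <;> ring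
  neg_add_cancel x := by ext <;> simp
  mul_assoc x y z := by ext <;> simp <;> ring
  one_mul x := by ext <;> simp
  mul_one x := by ext <;> simp
  left_distrib x y z := by ext <;> simp <;> ring
  right_distrib x y z := by ext <;> simp <;> ring
  zero_mul x := by ext <;> simp
  mul_zero x := by ext <;> simp
  mul_comm x y := by ext <;> simp <;> ring
  nsmul := nsmulRec
  zsmul := zsmulRec

@[simp] lemma sub_a (x y : A3) : (x-y).a = x.a - y.a := by
  rw [sub_eq_add_neg]; simp; ring
@[simp] lemma sub_b (x y : A3) : (x-y).b = x.b - y.b := by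
  rw [sub_eq_add_neg]; simp; ring
@[simp] lemma sub_c (x y : A3) : (x-y).c = x.c - y.c := by
  rw [sub_eq_add_neg]; simp; ring

end A3

/-- The monoid hom `z ↦ 1 + z s + z² m` (i.e. `(1+s/... )^z`). -/
def eA : Multiplicative ℤ →* A3 where
  toFun z := ⟨1, z.toAdd, z.toAdd^2⟩
  map_one' := by ext <;> simp
  map_mul' x y := by
    ext <;> simp [toAdd_mul] <;> ring

noncomputable def phi : LaurentPolynomial ℤ →ₐ[ℤ] A3 :=
  AddMonoidAlgebra.lift ℤ A3 ℤ eA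

@[simp] lemma phi_T (z : ℤ) : phi (T z) = ⟨1, z, z^2⟩ := by
  have : (T z : LaurentPolynomial ℤ) = AddMonoidAlgebra.single z 1 := rfl
  rw [phi, this, AddMonoidAlgebra.lift_single]
  simp [eA]

lemma intCast_A3 (r : ℤ) : ((r : ℤ) : A3) = ⟨r, 0, 0⟩ := by
  induction r using Int.induction_on with
  | zero => ext <;> simp
  | succ n ih => rw [Int.cast_add, Int.cast_one, ih]; ext <;> simp
  | pred n ih => rw [Int.cast_sub, ih, Int.cast_one]; ext <;> simp

@[simp] lemma phi_C (r : ℤ) : phi (C r) = ⟨r, 0, 0⟩ := by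
  rw [C_eq_algebraMap, AlgHom.commutes]
  have : (algebraMap ℤ A3) r = ((r : ℤ) : A3) := by
    simp [Algebra.algebraMap_eq_smul_one, zsmul_eq_mul]
  rw [this, intCast_A3]

theorem dvd_T_sub_one (a : ℤ) : (T 1 - 1 : LaurentPolynomial ℤ) ∣ T a - 1 := by
  induction a using Int.induction_on with
  | zero => simp
  | succ n ih =>
      have h : (T ((n:ℤ)+1) - 1 : LaurentPolynomial ℤ)
          = T (n:ℤ) * (T 1 - 1) + (T (n:ℤ) - 1) := by
        rw [T_add]; ring
      rw [h]
      exact dvd_add (Dvd.intro_left _ rfl) ih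
  | pred n ih =>
      have h : (T (-(n:ℤ)-1) - 1 : LaurentPolynomial ℤ)
          = (T (-(n:ℤ)) - 1) - T (-(n:ℤ)-1) * (T 1 - 1) := by
        have : (T (-(n:ℤ)) : LaurentPolynomial ℤ) = T (-(n:ℤ)-1) * T 1 := by
          rw [← T_add]; ring_nf
        rw [this]; ring
      rw [h]
      exact dvd_sub ih (Dvd.intro_left _ rfl)

theorem dvd_sub_C (p : LaurentPolynomial ℤ) :
    (T 1 - 1 : LaurentPolynomial ℤ) ∣ p - C ((phi p).a) := by
  induction p using LaurentPolynomial.induction_on' with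
  | add p q hp hq =>
      have : p + q - C ((phi (p+q)).a) = (p - C ((phi p).a)) + (q - C ((phi q).a)) := by
        simp [map_add]; ring
      rw [this]; exact dvd_add hp hq
  | C_mul_T n r =>
      have : (phi (C r * T n)).a = r := by simp [intCast_A3]
      rw [this]
      have h2 : (C r * T n - C r : LaurentPolynomial ℤ) = C r * (T n - 1) := by ring
      rw [h2]
      exact Dvd.dvd.mul_left (dvd_T_sub_one n) _

theorem dvd_of_phi_a (p : LaurentPolynomial ℤ) (h : (phi p).a = 0) :
    (T 1 - 1 : LaurentPolynomial ℤ) ∣ p := by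
  have := dvd_sub_C p
  rw [h] at this; simpa using this

lemma A3_three : (3 : A3) = ⟨3, 0, 0⟩ := by
  have : (3:A3) = ((3:ℤ) : A3) := by norm_cast
  rw [this, intCast_A3]

lemma phi_E2 : phi ((T 1 - 1 : LaurentPolynomial ℤ)^2) = ⟨0,0,2⟩ := by
  rw [map_pow, map_sub, map_one, phi_T]
  ext <;> simp [pow_two]

lemma phi_E3 : phi ((T 1 - 1 : LaurentPolynomial ℤ)^3) = 0 := by
  rw [map_pow, map_sub, map_one, phi_T]
  ext <;> simp [pow_succ, pow_two]

lemma sq_forward {a b c : ℤ}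
    (h : ((T 1 - 1 : LaurentPolynomial ℤ))^2 ∣ (T a + T b - T c - 1 : LaurentPolynomial ℤ)) :
    c = a + b := by
  obtain ⟨w, hw⟩ := h
  have hb := congrArg (fun p => (phi p).b) hw
  simp only [map_add, map_sub, map_mul, map_one, phi_T, phi_E2] at hb
  simp at hb
  omega

lemma cube_forward {a b c : ℤ}
    (h : ((T 1 - 1 : LaurentPolynomial ℤ))^3 ∣
      (T a + T b * (1 - T 1) + T c + (T 1 - 3) : LaurentPolynomial ℤ)) :
    c = -a ∧ b = a * a := by
  obtain ⟨w, hw⟩ := h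
  have h0 := congrArg phi hw
  simp only [map_add, map_sub, map_mul, map_one, map_ofNat, phi_T, phi_E3, zero_mul] at h0
  have hb := congrArg A3.b h0
  have hc := congrArg A3.c h0
  simp [A3_three] at hb hc
  refine ⟨by omega, ?_⟩
  have hc2 : c = -a := by omega
  rw [hc2] at hc
  have h2 : 2*b = 2*(a*a) := by linear_combination -hc
  omega

lemma sq_backward (a b : ℤ) :
    ((T 1 - 1 : LaurentPolynomial ℤ))^2 ∣ (T a + T b - T (a+b) - 1 : LaurentPolynomial ℤ) := by
  have key : (T a + T b - T (a+b) - 1 : LaurentPolynomial ℤ)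
      = -((T a - 1) * (T b - 1)) := by
    rw [T_add]; ring
  rw [key]
  exact dvd_neg.mpr (by rw [pow_two]; exact mul_dvd_mul (dvd_T_sub_one a) (dvd_T_sub_one b))

lemma cube_backward (a : ℤ) :
    ((T 1 - 1 : LaurentPolynomial ℤ))^3 ∣
      (T a + T (a*a) * (1 - T 1) + T (-a) + (T 1 - 3) : LaurentPolynomial ℤ) := by
  obtain ⟨q, hq⟩ := dvd_T_sub_one a
  obtain ⟨r, hr⟩ := dvd_T_sub_one (a*a)
  have h1 : (T (-a) : LaurentPolynomial ℤ) * T a = 1 := by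
    rw [← T_add]; simp
  have key : (T a + T (a*a) * (1 - T 1) + T (-a) + (T 1 - 3) : LaurentPolynomial ℤ)
      = T (-a) * (T a - 1)^2 - (T 1 - 1) * (T (a*a) - 1) := by
    linear_combination (2 - T a : LaurentPolynomial ℤ) * h1
  have hqa : (phi q).a = a := by
    have := congrArg (fun p => (phi p).b) hq
    simp at this
    omega
  have hra : (phi r).a = a * a := by
    have := congrArg (fun p => (phi p).b) hr
    simp at this
    omega
  have key2 : (T a + T (a*a) * (1 - T 1) + T (-a) + (T 1 - 3) : LaurentPolynomial ℤ)
      = (T 1 - 1)^2 * (T (-a) * q^2 - r) := by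
    rw [key, hq, hr]; ring
  rw [key2, pow_succ]
  refine mul_dvd_mul dvd_rfl ?_
  apply dvd_of_phi_a
  simp [map_sub, map_mul, map_pow, phi_T, hqa, hra, pow_two]

/-- There exist integers `z4, ..., z12` satisfying the seven divisibility
conditions in `ℤ[X, X⁻¹]` iff `z3 = z1 * z2`. -/
theorem product_via_divisibilities (z1 z2 z3 : ℤ) :
    (∃ z4 z5 z6 z7 z8 z9 z10 z11 z12 : ℤ,
      ((T 1 - 1 : LaurentPolynomial ℤ)) ^ 3 ∣
          (T z1 + T z4 * (1 - T 1) + T z10 + (T 1 - 3) : LaurentPolynomial ℤ) ∧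
      ((T 1 - 1 : LaurentPolynomial ℤ)) ^ 3 ∣
          (T z2 + T z5 * (1 - T 1) + T z11 + (T 1 - 3) : LaurentPolynomial ℤ) ∧
      ((T 1 - 1 : LaurentPolynomial ℤ)) ^ 2 ∣
          (T z4 + T z5 - T z6 - 1 : LaurentPolynomial ℤ) ∧
      ((T 1 - 1 : LaurentPolynomial ℤ)) ^ 2 ∣
          (T z1 + T z2 - T z7 - 1 : LaurentPolynomial ℤ) ∧
      ((T 1 - 1 : LaurentPolynomial ℤ)) ^ 3 ∣
          (T z7 + T z8 * (1 - T 1) + T z12 + (T 1 - 3) : LaurentPolynomial ℤ) ∧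
      ((T 1 - 1 : LaurentPolynomial ℤ)) ^ 2 ∣
          (T z3 + T z3 - T z9 - 1 : LaurentPolynomial ℤ) ∧
      ((T 1 - 1 : LaurentPolynomial ℤ)) ^ 2 ∣
          (T z6 + T z9 - T z8 - 1 : LaurentPolynomial ℤ))
    ↔ z3 = z1 * z2 := by
  constructor
  · rintro ⟨z4, z5, z6, z7, z8, z9, z10, z11, z12, h1, h2, h3, h4, h5, h6, h7⟩
    obtain ⟨-, e4⟩ := cube_forward h1
    obtain ⟨-, e5⟩ := cube_forward h2
    have e6 := sq_forward h3
    have e7 := sq_forward h4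
    obtain ⟨-, e8⟩ := cube_forward h5
    have e9 := sq_forward h6
    have e8' := sq_forward h7
    have h2 : 2*z3 = 2*(z1*z2) := by
      linear_combination e8 - e8' - e6 - e4 - e5 - e9 + (z7+z1+z2)*e7
    linarith
  · rintro rfl
    refine ⟨z1*z1, z2*z2, z1*z1 + z2*z2, z1+z2, (z1+z2)*(z1+z2), z1*z2 + z1*z2,
      -z1, -z2, -(z1+z2), cube_backward z1, cube_backward z2, sq_backward _ _,
      sq_backward _ _, cube_backward _, sq_backward _ _, ?_⟩
    have h := sq_backward (z1*z1 + z2*z2) (z1*z2 + z1*z2)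
    have e : z1*z1 + z2*z2 + (z1*z2 + z1*z2) = (z1+z2)*(z1+z2) := by ring
    rw [e] at h
    exact h
end

section
/- Let A be a Z[X^{±}]-module, G = A ⋊ Z the semidirect product with (a,z)(a',z') = (a + X^z·a', z+z'), and let f0, f1, ..., fn be elements of A. Set h0 = (-f0, 0) and hi = (fi, 0) for i = 1,...,n. Then there exist g0, g1, ..., gn in G with (g0 h0 g0^{-1})(g1 h1 g1^{-1}) ··· (gn hn gn^{-1}) = e if and only if there exist integers z1, ..., zn with X^{z1}·f1 + ··· + X^{zn}·fn = f0. -/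
open LaurentPolynomial

local notation "𝕋" => T (R := ℤ)

abbrev SDP (A : Type*) [AddCommGroup A] [Module (LaurentPolynomial ℤ) A] : Type _ := A × ℤ

variable {A : Type*} [AddCommGroup A] [Module (LaurentPolynomial ℤ) A]

noncomputable instance : Group (SDP A) where
  mul p q := (p.1 + 𝕋 p.2 • q.1, p.2 + q.2)
  one := ((0 : A), (0 : ℤ))
  inv p := (-(𝕋 (-p.2) • p.1), -p.2)
  mul_assoc p q r := by
    refine Prod.ext ?_ ?_
    · show p.1 + 𝕋 p.2 • q.1 + 𝕋 (p.2 + q.2) • r.1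
        = p.1 + 𝕋 p.2 • (q.1 + 𝕋 q.2 • r.1)
      rw [T_add, mul_smul, smul_add, add_assoc]
    · show p.2 + q.2 + r.2 = p.2 + (q.2 + r.2)
      ring
  one_mul p := by
    refine Prod.ext ?_ ?_
    · show (0 : A) + 𝕋 (0:ℤ) • p.1 = p.1
      rw [T_zero, one_smul, zero_add]
    · show (0 : ℤ) + p.2 = p.2
      ring
  mul_one p := by
    refine Prod.ext ?_ ?_
    · show p.1 + 𝕋 p.2 • (0 : A) = p.1
      rw [smul_zero, add_zero]
    · show p.2 + (0:ℤ) = p.2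
      ring
  inv_mul_cancel p := by
    refine Prod.ext ?_ ?_
    · show -(𝕋 (-p.2) • p.1) + 𝕋 (-p.2) • p.1 = (0 : A)
      rw [neg_add_cancel]
    · show -p.2 + p.2 = (0:ℤ)
      ring

lemma SDP.mul_def (p q : SDP A) : p * q = (p.1 + 𝕋 p.2 • q.1, p.2 + q.2) := rfl
lemma SDP.inv_def (p : SDP A) : p⁻¹ = (-(𝕋 (-p.2) • p.1), -p.2) := rfl
lemma SDP.one_def : (1 : SDP A) = ((0 : A), (0 : ℤ)) := rfl

lemma SDP.conj (a : A) (g : SDP A) :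
    g * ((a, 0) : SDP A) * g⁻¹ = (𝕋 g.2 • a, 0) := by
  refine Prod.ext ?_ ?_
  · show g.1 + 𝕋 g.2 • a + 𝕋 (g.2 + 0) • (-(𝕋 (-g.2) • g.1)) = 𝕋 g.2 • a
    rw [add_zero, smul_neg, ← mul_smul, ← T_add, add_neg_cancel, T_zero, one_smul]
    abel
  · show g.2 + 0 + -g.2 = 0
    ring

lemma SDP.prod_ofFn (n : ℕ) (c : Fin n → A) :
    (List.ofFn fun i => ((c i, 0) : SDP A)).prod = (∑ i, c i, 0) := by
  induction n with
  | zero => simp [SDP.one_def]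
  | succ m ih =>
    rw [List.ofFn_succ, List.prod_cons, ih, Fin.sum_univ_succ, SDP.mul_def]
    simp [T_zero]

/-- The spherical equation `(g0 h0 g0⁻¹)(g1 h1 g1⁻¹) ⋯ (gn hn gn⁻¹) = e` with
`h0 = (-f0, 0)`, `hi = (fi, 0)` has a solution in `A ⋊ ℤ` iff
`X^{z1}·f1 + ⋯ + X^{zn}·fn = f0` has an integer solution. -/
theorem spherical_eq_iff_monomial_eq (n : ℕ) (f : Fin n → A) (f0 : A) :
    (∃ (g0 : SDP A) (g : Fin n → SDP A),
        g0 * ((-f0, 0) : SDP A) * g0⁻¹ *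
          (List.ofFn fun i => g i * ((f i, 0) : SDP A) * (g i)⁻¹).prod = 1)
    ↔ ∃ z : Fin n → ℤ, ∑ i, 𝕋 (z i) • f i = f0 := by
  constructor
  · rintro ⟨g0, g, h⟩
    rw [SDP.conj] at h
    simp only [SDP.conj] at h
    rw [SDP.prod_ofFn, SDP.mul_def, SDP.one_def, Prod.mk.injEq] at h
    refine ⟨fun i => (g i).2 - g0.2, ?_⟩
    have h1 := h.1
    dsimp only at h1
    have : 𝕋 (-g0.2) • (𝕋 g0.2 • (-f0) + 𝕋 0 • ∑ i, 𝕋 (g i).2 • f i) = 0 := by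
      rw [h1, smul_zero]
    rw [T_zero, one_smul, smul_add, ← mul_smul, ← T_add, neg_add_cancel, T_zero, one_smul,
      Finset.smul_sum] at this
    have := neg_eq_of_add_eq_zero_right this
    rw [neg_neg] at this
    rw [this]
    refine Finset.sum_congr rfl fun i _ => ?_
    rw [← mul_smul, ← T_add]
    ring_nf
  · rintro ⟨z, hz⟩
    refine ⟨(0, 0), fun i => (0, z i), ?_⟩
    simp only [SDP.conj]
    rw [SDP.prod_ofFn, SDP.mul_def, SDP.one_def]
    simp only
    rw [T_zero, one_smul, hz]
    simp
end

section
/- Let A be a Z[X^{±}]-module and G = A ⋊ Z. Let H ≤ G be the subgroup generated by elements g1 = (a1, z1), ..., gK = (aK, zK) with z1, ..., zK not all zero, and let d be the gcd of z1, ..., zK. Then the intersection H ∩ (A × {0}) is closed under multiplication by X^d and X^{-d}; that is, it is a Z[X^{±d}]-submodule of A. -/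
open LaurentPolynomial

local notation "𝕋" => T (R := ℤ)

variable {A : Type*} [AddCommGroup A] [Module (LaurentPolynomial ℤ) A]

/-- Let `H ≤ A ⋊ ℤ` be generated by `(a i, z i)`, with the `z i` not all zero,
and let `d = gcd(z 1, …, z K)`. Then `H ∩ (A × {0})` is closed under
multiplication by `X^d` and `X^{-d}`. -/
theorem intersection_closed_under_Td (K : ℕ) (a : Fin K → A) (z : Fin K → ℤ)
    (hz : ∃ i, z i ≠ 0) (d : ℤ) (hd : d = Finset.univ.gcd z) :
    ∀ p ∈ Subgroup.closure (Set.range fun i => ((a i, z i) : SDP A)),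
      p.2 = 0 →
        ((𝕋 d • p.1, (0 : ℤ)) : SDP A) ∈
            Subgroup.closure (Set.range fun i => ((a i, z i) : SDP A)) ∧
        ((𝕋 (-d) • p.1, (0 : ℤ)) : SDP A) ∈
            Subgroup.closure (Set.range fun i => ((a i, z i) : SDP A)) := by
  intro p hp hp2
  set H := Subgroup.closure (Set.range fun i => ((a i, z i) : SDP A)) with hH
  -- the set of attained second coordinates is an additive subgroup of ℤ
  set Z : AddSubgroup ℤ :=
    { carrier := {n : ℤ | ∃ b : A, ((b, n) : SDP A) ∈ H}
      zero_mem' := ⟨0, one_mem H⟩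
      add_mem' := by
        rintro n m ⟨b, hb⟩ ⟨c, hc⟩
        exact ⟨b + 𝕋 n • c, mul_mem hb hc⟩
      neg_mem' := by
        rintro n ⟨b, hb⟩
        exact ⟨-(𝕋 (-n) • b), inv_mem hb⟩ } with hZ
  have hzZ : ∀ i, z i ∈ Z := fun i =>
    ⟨a i, Subgroup.subset_closure ⟨i, rfl⟩⟩
  have hdZ : d ∈ Z := by
    obtain ⟨g, hg⟩ := Int.subgroup_cyclic Z
    have hgdvd : ∀ i, g ∣ z i := by
      intro i
      have := hzZ i
      rw [hg, AddSubgroup.mem_closure_singleton] at this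
      obtain ⟨n, hn⟩ := this
      exact ⟨n, by rw [← hn, smul_eq_mul]; ring⟩
    have : g ∣ d := hd ▸ Finset.dvd_gcd fun i _ => hgdvd i
    obtain ⟨n, hn⟩ := this
    rw [hg, AddSubgroup.mem_closure_singleton]
    exact ⟨n, by rw [hn, smul_eq_mul]; ring⟩
  obtain ⟨b, hb⟩ := hdZ
  have hpe : p = ((p.1, 0) : SDP A) := by rw [← hp2]
  constructor
  · have key : ((𝕋 d • p.1, (0 : ℤ)) : SDP A) = (b, d) * p * (b, d)⁻¹ := by
      rw [hpe, SDP.inv_def, SDP.mul_def, SDP.mul_def]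
      refine Prod.ext ?_ ?_
      · show 𝕋 d • p.1 = b + 𝕋 d • p.1 + 𝕋 (d + 0) • -(𝕋 (-d) • b)
        rw [add_zero, smul_neg, ← mul_smul, ← T_add, add_neg_cancel, T_zero, one_smul]
        abel
      · show (0 : ℤ) = d + 0 + -d
        ring
    rw [key]
    exact mul_mem (mul_mem hb hp) (inv_mem hb)
  · have key : ((𝕋 (-d) • p.1, (0 : ℤ)) : SDP A) = (b, d)⁻¹ * p * (b, d) := by
      rw [hpe, SDP.inv_def, SDP.mul_def, SDP.mul_def]
      refine Prod.ext ?_ ?_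
      · show 𝕋 (-d) • p.1 = -(𝕋 (-d) • b) + 𝕋 (-d) • p.1 + 𝕋 (-d + 0) • b
        rw [add_zero]
        abel
      · show (0 : ℤ) = -d + 0 + d
        ring
    rw [key]
    exact mul_mem (mul_mem (inv_mem hb) hp) hb
end
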